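/- In the setting of Theorem 1 (n ≥ 1 agents, learning rate λ > 0, J : E_θ → E_r → ℝ, J₀ : E_θ → ℝ, θ, S, r given; G(r') := gradient of θ' ↦ J(θ', r') at θ, Agg(r') := (1/n)·(S + θ + λ·G(r')), Φ := J₀ ∘ Agg, g := gradient of r' ↦ J(θ, r') at r nonzero, v := g/‖g‖, G differentiable at r with derivative M, J₀ differentiable at Agg(r), Φ differentiable with L-Lipschitz gradient for L > 0, B := ⟪∇J₀(Agg(r)), M(v)⟫ > 0), choosing the attack budget ε := λB/(nL) yields J₀(Agg(r − ε·v)) ≤ J₀(Agg(r)) − λ²B²/(2n²L); i.e., the attacker can guarantee a decrease of the global objective of at least λ²B²/(2n²L). -/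

import Mathlib

open scoped RealInnerProductSpace

/-!
Since `Φ` has an `L`-Lipschitz gradient, the descent lemma gives
`Φ (r - ε • v) ≤ Φ r - ε * ⟪∇Φ r, v⟫ + L / 2 * ε ^ 2` for the unit vector `v`. By the chain rule
through the affine aggregation, `⟪∇Φ r, v⟫ = λ B / n`, and the quadratic in `ε` is minimised at
`ε = λ B / (n L)`, where it equals `-λ² B² / (2 n² L)`.
-/

section Descent

variable {E : Type*} [NormedAddCommGroup E] [InnerProductSpace ℝ E] [CompleteSpace E]
  {Φ : E → ℝ}

theorem hasDerivAt_apply_add_smul (hd : Differentiable ℝ Φ) (x u : E) (t : ℝ) :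
    HasDerivAt (fun s : ℝ => Φ (x + s • u)) ⟪gradient Φ (x + t • u), u⟫ t := by
  have hline : HasDerivAt (fun s : ℝ => x + s • u) u t := by
    simpa using ((hasDerivAt_id t).smul_const u).const_add x
  have := (hd (x + t • u)).hasFDerivAt.comp_hasDerivAt t hline
  rwa [← inner_gradient_left] at this

theorem apply_add_le_of_lipschitzWith_gradient {L : NNReal} (hd : Differentiable ℝ Φ)
    (hlip : LipschitzWith L (gradient Φ)) (x u : E) :
    Φ (x + u) ≤ Φ x + ⟪gradient Φ x, u⟫ + L / 2 * ‖u‖ ^ 2 := by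
  -- `ψ` has derivative `⟪∇Φ (x + t • u) - ∇Φ x, u⟫ - L t ‖u‖² ≤ 0` on `[0, 1]`.
  set ψ : ℝ → ℝ := fun t => Φ (x + t • u) - t * ⟪gradient Φ x, u⟫ - L / 2 * t ^ 2 * ‖u‖ ^ 2
  have hψ : ∀ t, HasDerivAt ψ
      (⟪gradient Φ (x + t • u), u⟫ - ⟪gradient Φ x, u⟫ - L * t * ‖u‖ ^ 2) t := by
    intro t
    have := (((hasDerivAt_apply_add_smul hd x u t).sub
      ((hasDerivAt_id t).mul_const ⟪gradient Φ x, u⟫)).sub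
      (((hasDerivAt_pow 2 t).const_mul (L / 2 : ℝ)).mul_const (‖u‖ ^ 2)))
    exact this.congr_deriv (by push_cast; ring)
  obtain ⟨c, hc, hslope⟩ := exists_hasDerivAt_eq_slope ψ _ zero_lt_one
    (continuous_iff_continuousAt.2 fun t => (hψ t).continuousAt).continuousOn fun t _ => hψ t
  have hgrad : ⟪gradient Φ (x + c • u) - gradient Φ x, u⟫ ≤ L * c * ‖u‖ ^ 2 :=
    calc ⟪gradient Φ (x + c • u) - gradient Φ x, u⟫
        ≤ ‖gradient Φ (x + c • u) - gradient Φ x‖ * ‖u‖ := real_inner_le_norm _ _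
      _ ≤ L * ‖(x + c • u) - x‖ * ‖u‖ := by
          gcongr; simpa [dist_eq_norm] using hlip.dist_le_mul (x + c • u) x
      _ = L * c * ‖u‖ ^ 2 := by
          rw [add_sub_cancel_left, norm_smul, Real.norm_of_nonneg hc.1.le]; ring
  have : ψ 1 ≤ ψ 0 := by
    rw [inner_sub_left] at hgrad
    simp only [sub_zero, div_one] at hslope
    linarith
  norm_num [ψ] at this ⊢
  linarith

theorem apply_sub_smul_le_of_lipschitzWith_gradient {L : NNReal} (hL : 0 < L)
    (hd : Differentiable ℝ Φ) (hlip : LipschitzWith L (gradient Φ)) (x : E) {v : E}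
    (hv : ‖v‖ = 1) :
    Φ (x - (⟪gradient Φ x, v⟫ / L) • v) ≤ Φ x - ⟪gradient Φ x, v⟫ ^ 2 / (2 * L) := by
  set a := ⟪gradient Φ x, v⟫
  have hL' : (L : ℝ) ≠ 0 := by positivity
  have := apply_add_le_of_lipschitzWith_gradient hd hlip x (-((a / L) • v))
  rw [← sub_eq_add_neg, inner_neg_right, real_inner_smul_right, norm_neg, norm_smul, hv,
    Real.norm_eq_abs, mul_one, sq_abs] at this
  convert this using 1
  field_simp
  ring

end Descent

section Gradient

variable {𝕜 E F : Type*} [RCLike 𝕜] [NormedAddCommGroup E] [InnerProductSpace 𝕜 E]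
  [CompleteSpace E] [NormedAddCommGroup F] [InnerProductSpace 𝕜 F] [CompleteSpace F]

open scoped InnerProductSpace

theorem inner_gradient_comp {f : F → 𝕜} {A : E → F} {A' : E →L[𝕜] F} {x : E}
    (hf : DifferentiableAt 𝕜 f (A x)) (hA : HasFDerivAt A A' x) (v : E) :
    ⟪gradient (f ∘ A) x, v⟫_𝕜 = ⟪gradient f (A x), A' v⟫_𝕜 := by
  rw [inner_gradient_left, inner_gradient_left, (hf.hasFDerivAt.comp x hA).fderiv]
  rfl

end Gradient

theorem stmt_9_general (dθ dr : ℕ) (n : ℕ) (hn : 1 ≤ n) (lam L : ℝ)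
    (hL : 0 < L)
    (J₀ : EuclideanSpace ℝ (Fin dθ) → ℝ)
    (θ S : EuclideanSpace ℝ (Fin dθ)) (r : EuclideanSpace ℝ (Fin dr))
    (G : EuclideanSpace ℝ (Fin dr) → EuclideanSpace ℝ (Fin dθ))
    (Agg : EuclideanSpace ℝ (Fin dr) → EuclideanSpace ℝ (Fin dθ))
    (hAgg : ∀ r', Agg r' = (n : ℝ)⁻¹ • (S + θ + lam • G r'))
    (Φ : EuclideanSpace ℝ (Fin dr) → ℝ) (hΦ : Φ = J₀ ∘ Agg)
    (g : EuclideanSpace ℝ (Fin dr))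
    (hg0 : g ≠ 0)
    (v : EuclideanSpace ℝ (Fin dr)) (hv : v = ‖g‖⁻¹ • g)
    (M : EuclideanSpace ℝ (Fin dr) →L[ℝ] EuclideanSpace ℝ (Fin dθ))
    (hM : HasFDerivAt G M r)
    (hJ₀ : DifferentiableAt ℝ J₀ (Agg r))
    (hΦdiff : Differentiable ℝ Φ)
    (hΦlip : LipschitzWith L.toNNReal (gradient Φ))
    (B : ℝ) (hB : B = ⟪gradient J₀ (Agg r), M v⟫)
    (ε : ℝ) (hε : ε = lam * B / (n * L)) :
    J₀ (Agg (r - ε • v)) ≤ J₀ (Agg r) - lam ^ 2 * B ^ 2 / (2 * n ^ 2 * L) := by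
  have hn0 : (n : ℝ) ≠ 0 := Nat.cast_ne_zero.2 (by omega)
  have hv1 : ‖v‖ = 1 := hv ▸ norm_smul_inv_norm hg0
  have hAggM : HasFDerivAt Agg ((n : ℝ)⁻¹ • lam • M) r := by
    rw [funext hAgg]
    exact ((hM.const_smul lam).const_add (S + θ)).const_smul (n : ℝ)⁻¹
  have hslope : ⟪gradient Φ r, v⟫ = (n : ℝ)⁻¹ * (lam * B) := by
    rw [hΦ, inner_gradient_comp hJ₀ hAggM, hB, smul_apply, smul_apply, real_inner_smul_right,
      real_inner_smul_right]
  have hstep := apply_sub_smul_le_of_lipschitzWith_gradient (Real.toNNReal_pos.2 hL)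
    hΦdiff hΦlip r hv1
  have hε' : ε = (n : ℝ)⁻¹ * (lam * B) / L := by rw [hε]; field_simp
  have hgain : ((n : ℝ)⁻¹ * (lam * B)) ^ 2 / (2 * L) = lam ^ 2 * B ^ 2 / (2 * n ^ 2 * L) := by
    field_simp
  rwa [hslope, Real.coe_toNNReal _ hL.le, ← hε', hgain, hΦ] at hstep

/-- Optimal-budget consequence of Theorem 1: choosing `ε = λB/(nL)` guarantees a
decrease of the global objective of at least `λ²B²/(2n²L)`. -/
theorem stmt_9 (dθ dr : ℕ) (n : ℕ) (hn : 1 ≤ n) (lam L : ℝ)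
    (hlam : 0 < lam) (hL : 0 < L)
    (J : EuclideanSpace ℝ (Fin dθ) → EuclideanSpace ℝ (Fin dr) → ℝ)
    (J₀ : EuclideanSpace ℝ (Fin dθ) → ℝ)
    (θ S : EuclideanSpace ℝ (Fin dθ)) (r : EuclideanSpace ℝ (Fin dr))
    (G : EuclideanSpace ℝ (Fin dr) → EuclideanSpace ℝ (Fin dθ))
    (hG : ∀ r', G r' = gradient (fun θ' => J θ' r') θ)
    (Agg : EuclideanSpace ℝ (Fin dr) → EuclideanSpace ℝ (Fin dθ))
    (hAgg : ∀ r', Agg r' = (n : ℝ)⁻¹ • (S + θ + lam • G r'))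
    (Φ : EuclideanSpace ℝ (Fin dr) → ℝ) (hΦ : Φ = J₀ ∘ Agg)
    (g : EuclideanSpace ℝ (Fin dr))
    (hg : g = gradient (fun r' => J θ r') r) (hg0 : g ≠ 0)
    (v : EuclideanSpace ℝ (Fin dr)) (hv : v = ‖g‖⁻¹ • g)
    (M : EuclideanSpace ℝ (Fin dr) →L[ℝ] EuclideanSpace ℝ (Fin dθ))
    (hM : HasFDerivAt G M r)
    (hJ₀ : DifferentiableAt ℝ J₀ (Agg r))
    (hΦdiff : Differentiable ℝ Φ)
    (hΦlip : LipschitzWith L.toNNReal (gradient Φ))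
    (B : ℝ) (hB : B = ⟪gradient J₀ (Agg r), M v⟫) (hBpos : 0 < B)
    (ε : ℝ) (hε : ε = lam * B / (n * L)) :
    J₀ (Agg (r - ε • v)) ≤ J₀ (Agg r) - lam ^ 2 * B ^ 2 / (2 * n ^ 2 * L) :=
  stmt_9_general dθ dr n hn lam L hL J₀ θ S r G Agg hAgg Φ hΦ g hg0 v hv M hM hJ₀ hΦdiff hΦlip B hB
    ε hε
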